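/- The map defined on the span V of V₁,...,V₆ by the relations R₂(V₁) = (32/9)c₁V₃ - (64/9)V₆, R₂(V₂) = (64/9)c₀V₃, R₂(V₃) = (8/3)V₂, R₂(V₄) = -(4/3)c₁V₁ - (16/3)V₅, R₂(V₅) = -(8/9)c₁²V₃ - (32/9)c₀V₄ + (16/9)c₁V₆, R₂(V₆) = -(8/3)c₀V₁ + (4/3)c₁V₂ is a linear endomorphism T of the 6-dimensional space span{V₁,...,V₆} whose square satisfies T² = R₁³ - φR₁ - θ restricted to V with R₁ acting as 0 on V, i.e., T² = -θ·Id where θ = -(512/27)c₀; equivalently, the 6×6 matrix of T (in the basis V₁,...,V₆) squares to (512/27)c₀ times the identity matrix. -/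

import Mathlib

theorem R2_action_squares_to_theta (c₀ c₁ : ℝ) (V : Type*) [AddCommGroup V]
    [Module ℝ V] (b : Module.Basis (Fin 6) ℝ V) (T : V →ₗ[ℝ] V)
    (h1 : T (b 0) = ((32 / 9) * c₁) • b 2 - (64 / 9 : ℝ) • b 5)
    (h2 : T (b 1) = ((64 / 9) * c₀) • b 2)
    (h3 : T (b 2) = (8 / 3 : ℝ) • b 1)
    (h4 : T (b 3) = (-((4 / 3) * c₁)) • b 0 - (16 / 3 : ℝ) • b 4)
    (h5 : T (b 4) = (-((8 / 9) * c₁ ^ 2)) • b 2 - ((32 / 9) * c₀) • b 3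
        + ((16 / 9) * c₁) • b 5)
    (h6 : T (b 5) = (-((8 / 3) * c₀)) • b 0 + ((4 / 3) * c₁) • b 1) :
    T ∘ₗ T = ((512 / 27) * c₀) • LinearMap.id := by
  refine b.ext fun i => ?_
  fin_cases i <;>
    simp only [LinearMap.comp_apply, LinearMap.smul_apply, LinearMap.id_apply,
      Fin.reduceFinMk, map_add, map_sub, map_smul, h1, h2, h3, h4, h5, h6] <;>
    module
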